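/- arXiv:1301.4663 — 2 statements merged into one kernel-verified Lean document; each statement's English description precedes it below -/
import Mathlib

section
/- Fix a dyadic interval I₀ and assume that the energy inequality of Part 1 holds: for every collection ℐ of pairwise disjoint dyadic subintervals of I₀, Σ_{I∈ℐ} P(σ1_{I₀},I)² E(w,I)² w(I) ≤ C₀ 𝓗² σ(I₀). Then the energy stopping intervals satisfy σ(∪{F : F ∈ ℱ_energy(I₀)}) ≤ σ(I₀)/10. -/
open MeasureTheory Set
open scoped ENNReal NNReal

noncomputable section

namespace TwoWeight

/-- Truncated Hilbert transform `H_{e,d}(f σ)(x) = ∫_{e<|x-y|<d} f(y)/(y-x) dσ(y)`. -/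
def Htr (σ : Measure ℝ) (f : ℝ → ℝ) (e d : ℝ) (x : ℝ) : ℝ :=
  ∫ y in {y : ℝ | e < |x - y| ∧ |x - y| < d}, f y / (y - x) ∂σ

/-- Poisson integral `P(μ, I)` for the interval `I = [a,b]`. -/
def Poisson (μ : Measure ℝ) (a b : ℝ) : ℝ≥0∞ :=
  ∫⁻ x, ENNReal.ofReal ((b - a) / ((b - a) ^ 2 + (Metric.infDist x (Icc a b)) ^ 2)) ∂μ

/-- The Poisson `A₂` condition with constant `A`, over all intervals. -/
def A2Cond (σ w : Measure ℝ) (A : ℝ) : Prop :=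
  ∀ a b : ℝ, a < b → Poisson σ a b * Poisson w a b ≤ ENNReal.ofReal A

/-- The two interval testing conditions with constant `T`, uniformly over truncations. -/
def Testing (σ w : Measure ℝ) (T : ℝ) : Prop :=
  ∀ a b : ℝ, a < b → ∀ e d : ℝ, 0 < e → e < d →
    (∫⁻ x in Icc a b, ENNReal.ofReal ((Htr σ ((Icc a b).indicator 1) e d x) ^ 2) ∂w
        ≤ ENNReal.ofReal (T ^ 2) * σ (Icc a b)) ∧
    (∫⁻ x in Icc a b, ENNReal.ofReal ((Htr w ((Icc a b).indicator 1) e d x) ^ 2) ∂σ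
        ≤ ENNReal.ofReal (T ^ 2) * w (Icc a b))

/-- A dyadic interval `[2^k n, 2^k(n+1))` of the standard dyadic grid. -/
structure DI where
  k : ℤ
  n : ℤ

namespace DI
/-- left endpoint -/
def left (I : DI) : ℝ := (2 : ℝ) ^ I.k * (I.n : ℝ)
/-- right endpoint -/
def right (I : DI) : ℝ := (2 : ℝ) ^ I.k * ((I.n : ℝ) + 1)
/-- the underlying set -/
def set (I : DI) : Set ℝ := Ico I.left I.right
/-- length -/
def len (I : DI) : ℝ := (2 : ℝ) ^ I.k
/-- left child -/
def lc (I : DI) : DI := ⟨I.k - 1, 2 * I.n⟩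
/-- right child -/
def rc (I : DI) : DI := ⟨I.k - 1, 2 * I.n + 1⟩
end DI

/-- `J ⋐ I` : `J ⊆ I` and `2^r |J| ≤ |I|`. -/
def csub (r : ℕ) (J I : DI) : Prop := J.set ⊆ I.set ∧ (2 : ℝ) ^ r * J.len ≤ I.len

/-- Distance of a subinterval `K ⊆ J` to the boundary of `J`. -/
def bdist (K J : DI) : ℝ := min (K.left - J.left) (J.right - K.right)

/-- Goodness of a dyadic interval, with parameters `r`, `eps`. -/
def Good (r : ℕ) (eps : ℝ) (I : DI) : Prop :=
  ∀ J : DI, I.set ⊆ J.set → (2 : ℝ) ^ ((r : ℤ) - 1) * I.len ≤ J.len →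
    I.len ^ eps * J.len ^ (1 - eps) ≤ bdist I.lc J ∧
    I.len ^ eps * J.len ^ (1 - eps) ≤ bdist I.rc J

/-- `σ`-average `𝔼^σ_I f` of `f` over `I`. -/
def avg (σ : Measure ℝ) (I : DI) (f : ℝ → ℝ) : ℝ :=
  (σ I.set).toReal⁻¹ * ∫ x in I.set, f x ∂σ

/-- Martingale difference `Δ^σ_I f`. -/
def mdiff (σ : Measure ℝ) (I : DI) (f : ℝ → ℝ) : ℝ → ℝ := fun x =>
  (I.lc.set.indicator (fun _ => avg σ I.lc f) x + I.rc.set.indicator (fun _ => avg σ I.rc f) x)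
    - I.set.indicator (fun _ => avg σ I f) x

/-- `L²(w)`-normalized Haar function `h^w_J`. -/
def haar (w : Measure ℝ) (J : DI) : ℝ → ℝ := fun x =>
  J.lc.set.indicator (fun _ =>
      Real.sqrt ((w J.rc.set).toReal / ((w J.lc.set).toReal * (w J.set).toReal))) x
    - J.rc.set.indicator (fun _ =>
      Real.sqrt ((w J.lc.set).toReal / ((w J.rc.set).toReal * (w J.set).toReal))) x

/-- `⟨x, h^w_J⟩_{L²(w)}`. -/
def haarX (w : Measure ℝ) (J : DI) : ℝ := ∫ x, x * haar w J x ∂w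

/-- Energy `E(w,J)²`. -/
def energySq (w : Measure ℝ) (J : DI) : ℝ :=
  (w J.set).toReal⁻¹ * ∫ x in J.set, ((x - avg w J id) / J.len) ^ 2 ∂w

/-- Poisson integral, as a real number, of a measure relative to a dyadic interval. -/
def PoissonR (μ : Measure ℝ) (I : DI) : ℝ := (Poisson μ I.left I.right).toReal

/-- The energy stopping inequality `P(σ1_{I₀},I)² E(w,I)² w(I) > 10 C₀ 𝓗² σ(I)`. -/
def EnergyBad (σ w : Measure ℝ) (C₀ H : ℝ) (I₀ I : DI) : Prop :=
  10 * C₀ * H ^ 2 * (σ I.set).toReal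
    < (PoissonR (σ.restrict I₀.set) I) ^ 2 * energySq w I * (w I.set).toReal

/-- `ℱ_energy(I₀)` : maximal dyadic intervals `I ⊊ I₀` satisfying `EnergyBad`. -/
def FEnergy (σ w : Measure ℝ) (C₀ H : ℝ) (I₀ : DI) : Set DI :=
  {I | I.set ⊂ I₀.set ∧ EnergyBad σ w C₀ H I₀ I ∧
    ∀ I' : DI, I'.set ⊂ I₀.set → EnergyBad σ w C₀ H I₀ I' → I.set ⊆ I'.set → I' = I}

/-- The child of `I` containing `J` (for `J` contained in a child of `I`). -/
def cc (I J : DI) : DI :=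
  @ite _ (J.set ⊆ I.lc.set) (Classical.propDecidable _) I.lc I.rc

/-- `𝔼^σ_J Δ^σ_I f` for `J ⋐ I` : the constant value of `Δ^σ_I f` on the child of `I`
containing `J`. -/
def coef (σ : Measure ℝ) (f : ℝ → ℝ) (I J : DI) : ℝ := avg σ (cc I J) f - avg σ I f

/-- `𝒬₂` : the second coordinates of a collection of pairs. -/
def coll2 (Q : Set (DI × DI)) : Set DI := {J | ∃ p ∈ Q, p.2 = J}

/-- `𝒬̃₁` : the intervals `(Q₁)_{Q₂}` of a collection of pairs. -/
def tcoll1 (Q : Set (DI × DI)) : Set DI := {K | ∃ p ∈ Q, cc p.1 p.2 = K}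

/-- Admissible collection of pairs relative to `I₀`. -/
def Admissible (σ w : Measure ℝ) (C₀ H : ℝ) (r : ℕ) (eps : ℝ) (I₀ : DI)
    (Q : Set (DI × DI)) : Prop :=
  (∀ p ∈ Q, csub r p.2 p.1 ∧ p.1.set ⊆ I₀.set ∧ Good r eps p.1) ∧
  (∀ p ∈ Q, ∀ p' ∈ Q, p'.2 = p.2 → ∀ I : DI, p'.1.set ⊆ I.set → I.set ⊆ p.1.set →
      Good r eps I → (I, p.2) ∈ Q) ∧
  (∀ p ∈ Q, ∀ F ∈ FEnergy σ w C₀ H I₀, ¬ (cc p.1 p.2).set ⊆ F.set ∧ ¬ p.2.set ⊆ F.set)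

/-- `Σ_{J ∈ 𝒬₂, J ⊆ K} ⟨x, h^w_J⟩²`. -/
def haarSum (w : Measure ℝ) (Q : Set (DI × DI)) (K : DI) : ℝ :=
  ∑' J : {J : DI // J ∈ coll2 Q ∧ J.set ⊆ K.set}, (haarX w J.1) ^ 2

/-- `size(𝒬) ≤ τ`. -/
def SizeBound (σ w : Measure ℝ) (I₀ : DI) (Q : Set (DI × DI)) (τ : ℝ) : Prop :=
  ∀ K ∈ tcoll1 Q ∪ coll2 Q,
    (PoissonR (σ.restrict (I₀.set \ K.set)) K) ^ 2 * haarSum w Q K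
      ≤ τ ^ 2 * ((σ K.set).toReal * K.len ^ 2)

/-- The bilinear form `B_𝒬(f,g)` (with truncation parameters `e < d`). -/
def BQ (σ w : Measure ℝ) (I₀ : DI) (Q : Set (DI × DI)) (e d : ℝ) (f g : ℝ → ℝ) : ℝ :=
  ∑' p : Q, coef σ f p.1.1 p.1.2
    * ∫ x, Htr σ ((I₀.set \ (cc p.1.1 p.1.2).set).indicator 1) e d x * mdiff w p.1.2 g x ∂w

/-- The bilinear form `B^{above}(f,g)`. -/
def BAbove (σ w : Measure ℝ) (r : ℕ) (I₀ : DI) (e d : ℝ) (f g : ℝ → ℝ) : ℝ :=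
  ∑' p : {p : DI × DI // p.1.set ⊆ I₀.set ∧ csub r p.2 p.1},
    coef σ f p.1.1 p.1.2
      * ∫ x, Htr σ ((cc p.1.1 p.1.2).set.indicator 1) e d x * mdiff w p.1.2 g x ∂w

/-- The stopping form `B^{stop}_{I₀}(f,g)`. -/
def BStop (σ w : Measure ℝ) (r : ℕ) (I₀ : DI) (e d : ℝ) (f g : ℝ → ℝ) : ℝ :=
  ∑' p : {p : DI × DI // p.1.set ⊆ I₀.set ∧ csub r p.2 p.1},
    coef σ f p.1.1 p.1.2
      * ∫ x, Htr σ ((I₀.set \ (cc p.1.1 p.1.2).set).indicator 1) e d x * mdiff w p.1.2 g x ∂w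

/-- The form with argument `H_σ 1_{I₀}`. -/
def BTop (σ w : Measure ℝ) (r : ℕ) (I₀ : DI) (e d : ℝ) (f g : ℝ → ℝ) : ℝ :=
  ∑' p : {p : DI × DI // p.1.set ⊆ I₀.set ∧ csub r p.2 p.1},
    coef σ f p.1.1 p.1.2
      * ∫ x, Htr σ (I₀.set.indicator 1) e d x * mdiff w p.1.2 g x ∂w

instance : Countable DI :=
  Function.Injective.countable (f := fun I : DI => (I.k, I.n))
    (fun ⟨a, b⟩ ⟨c, d⟩ h => by simpa using h)

lemma DI.pow_pos (k : ℤ) : (0 : ℝ) < 2 ^ k := zpow_pos (by norm_num) k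

/-- Dyadic nesting: if the shorter one meets the longer one, it is contained in it. -/
lemma DI.subset_of_le_of_not_disjoint (I J : DI) (hk : I.k ≤ J.k)
    (h : ¬ Disjoint I.set J.set) : I.set ⊆ J.set := by
  obtain ⟨x, hxI, hxJ⟩ := Set.not_disjoint_iff.1 h
  rw [DI.set, Set.mem_Ico] at hxI hxJ
  set δ : ℕ := (J.k - I.k).toNat with hδ
  have hδ' : (δ : ℤ) = J.k - I.k := Int.toNat_of_nonneg (sub_nonneg.2 hk)
  have hJk : J.k = I.k + (δ : ℤ) := by omega
  have h2 : (2 : ℝ) ≠ 0 := by norm_num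
  have hpow : (2 : ℝ) ^ J.k = 2 ^ I.k * ((2 : ℕ) ^ δ : ℕ) := by
    rw [hJk, zpow_add₀ h2, zpow_natCast]; push_cast; ring
  have hp : (0 : ℝ) < 2 ^ I.k := DI.pow_pos I.k
  -- translate endpoints
  have hJl : J.left = 2 ^ I.k * (((2 : ℤ) ^ δ * J.n : ℤ) : ℝ) := by
    rw [DI.left, hpow]; push_cast; ring
  have hJr : J.right = 2 ^ I.k * (((2 : ℤ) ^ δ * (J.n + 1) : ℤ) : ℝ) := by
    rw [DI.right, hpow]; push_cast; ring
  -- two integer inequalities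
  have h1 : ((2 : ℤ) ^ δ * J.n) ≤ I.n := by
    have : 2 ^ I.k * (((2 : ℤ) ^ δ * J.n : ℤ) : ℝ) < 2 ^ I.k * ((I.n : ℝ) + 1) := by
      rw [← hJl]; exact lt_of_le_of_lt hxJ.1 hxI.2
    have := (mul_lt_mul_iff_right₀ hp).1 this
    have : ((2 : ℤ) ^ δ * J.n : ℤ) < I.n + 1 := by exact_mod_cast this
    omega
  have h2' : (I.n + 1 : ℤ) ≤ (2 : ℤ) ^ δ * (J.n + 1) := by
    have : 2 ^ I.k * (I.n : ℝ) < 2 ^ I.k * (((2 : ℤ) ^ δ * (J.n + 1) : ℤ) : ℝ) := by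
      rw [← hJr]; exact lt_of_le_of_lt hxI.1 hxJ.2
    have := (mul_lt_mul_iff_right₀ hp).1 this
    have : (I.n : ℤ) < (2 : ℤ) ^ δ * (J.n + 1) := by exact_mod_cast this
    omega
  intro y hy
  rw [DI.set, Set.mem_Ico] at hy ⊢
  constructor
  · calc J.left = 2 ^ I.k * (((2 : ℤ) ^ δ * J.n : ℤ) : ℝ) := hJl
      _ ≤ 2 ^ I.k * (I.n : ℝ) := by
          apply mul_le_mul_of_nonneg_left _ hp.le; exact_mod_cast h1
      _ ≤ y := hy.1
  · calc y < 2 ^ I.k * ((I.n : ℝ) + 1) := hy.2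
      _ ≤ 2 ^ I.k * (((2 : ℤ) ^ δ * (J.n + 1) : ℤ) : ℝ) := by
          apply mul_le_mul_of_nonneg_left _ hp.le
          have : ((I.n + 1 : ℤ) : ℝ) ≤ (((2 : ℤ) ^ δ * (J.n + 1) : ℤ) : ℝ) := by
            exact_mod_cast h2'
          push_cast at this ⊢; linarith
      _ = J.right := hJr.symm

lemma DI.nested_of_not_disjoint (I J : DI) (h : ¬ Disjoint I.set J.set) :
    I.set ⊆ J.set ∨ J.set ⊆ I.set := by
  rcases le_total I.k J.k with hk | hk
  · exact Or.inl (DI.subset_of_le_of_not_disjoint I J hk h)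
  · exact Or.inr (DI.subset_of_le_of_not_disjoint J I hk (fun hd => h hd.symm))

lemma FEnergy_pairwiseDisjoint (σ w : Measure ℝ) (C₀ H : ℝ) (I₀ : DI) :
    (FEnergy σ w C₀ H I₀).PairwiseDisjoint DI.set := by
  intro F hF G hG hne
  by_contra hd
  rcases DI.nested_of_not_disjoint F G hd with hFG | hGF
  · exact hne (hF.2.2 G hG.1 hG.2.1 hFG).symm
  · exact hne (hG.2.2 F hF.1 hF.2.1 hGF)

lemma energySq_nonneg (w : Measure ℝ) (J : DI) : 0 ≤ energySq w J :=
  mul_nonneg (inv_nonneg.2 ENNReal.toReal_nonneg)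
    (integral_nonneg fun x => sq_nonneg _)

lemma DI.measure_lt_top (μ : Measure ℝ) [IsLocallyFiniteMeasure μ] (I : DI) :
    μ I.set < ⊤ :=
  lt_of_le_of_lt (measure_mono Set.Ico_subset_Icc_self) isCompact_Icc.measure_lt_top

/-- the energy inequality implies that the energy stopping intervals occupy
at most a tenth of the `σ`-mass of `I₀`. -/
theorem statement5 :
    ∀ (sg w : Measure ℝ), IsLocallyFiniteMeasure sg → IsLocallyFiniteMeasure w →
    ∀ C₀ H : ℝ, 0 < C₀ → ∀ I₀ : DI,
    (∀ J : Set DI, (∀ I ∈ J, I.set ⊆ I₀.set) → J.PairwiseDisjoint DI.set →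
      ∑' I : J, ENNReal.ofReal ((PoissonR (sg.restrict I₀.set) I.1) ^ 2 * energySq w I.1)
          * w I.1.set
        ≤ ENNReal.ofReal (C₀ * H ^ 2) * sg I₀.set) →
    sg (⋃ F ∈ FEnergy sg w C₀ H I₀, F.set) ≤ sg I₀.set / 10 := by
  intro sg w hsg hw C₀ H hC₀ I₀ hyp
  haveI := hsg; haveI := hw
  set ℱ := FEnergy sg w C₀ H I₀ with hℱ
  have hsub : ∀ F ∈ ℱ, F.set ⊆ I₀.set := fun F hF => hF.1.subset
  have hdisj : ℱ.PairwiseDisjoint DI.set := FEnergy_pairwiseDisjoint sg w C₀ H I₀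
  by_cases hH : H = 0
  · -- degenerate case: `ℱ` is empty
    have hempty : ℱ = ∅ := by
      rw [Set.eq_empty_iff_forall_notMem]
      intro F hF
      have hsing : ∀ I ∈ ({F} : Set DI), I.set ⊆ I₀.set := by
        intro I hI
        rw [Set.mem_singleton_iff] at hI
        rw [hI]
        exact hsub F hF
      have h1' := hyp {F} hsing (Set.pairwiseDisjoint_singleton F DI.set)
      have h1 : ENNReal.ofReal
            ((PoissonR (sg.restrict I₀.set) F) ^ 2 * energySq w F) * w F.set
          ≤ ENNReal.ofReal (C₀ * H ^ 2) * sg I₀.set :=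
        le_trans (ENNReal.le_tsum (⟨F, rfl⟩ : ({F} : Set DI))) h1'
      have hbad := hF.2.1
      rw [EnergyBad] at hbad
      subst hH
      simp only [ne_eq, OfNat.ofNat_ne_zero, not_false_eq_true, zero_pow, mul_zero,
        zero_mul] at hbad h1
      set P := PoissonR (sg.restrict I₀.set) F
      set E := energySq w F
      have hPE : 0 ≤ P ^ 2 * E := mul_nonneg (sq_nonneg P) (energySq_nonneg w F)
      have hwt : 0 < (w F.set).toReal := by
        rcases lt_or_eq_of_le ENNReal.toReal_nonneg with h | h
        · exact h
        · exfalso; nlinarith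
      have hPE' : 0 < P ^ 2 * E := by
        rcases lt_or_eq_of_le hPE with h | h
        · exact h
        · exfalso; nlinarith
      have hpos : 0 < ENNReal.ofReal (P ^ 2 * E) * w F.set :=
        ENNReal.mul_pos (ne_of_gt (ENNReal.ofReal_pos.2 hPE'))
          (ne_of_gt (ENNReal.toReal_pos_iff.1 hwt).1)
      rw [ENNReal.ofReal_zero, zero_mul, le_zero_iff] at h1
      exact absurd h1 (ne_of_gt hpos)
    rw [hempty]
    simp
  · have hc : 0 < C₀ * H ^ 2 := mul_pos hC₀ (by positivity)
    have h1 := hyp ℱ hsub hdisj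
    have key : ∀ F : ℱ,
        ENNReal.ofReal (10 * (C₀ * H ^ 2)) * sg F.1.set
          ≤ ENNReal.ofReal ((PoissonR (sg.restrict I₀.set) F.1) ^ 2 * energySq w F.1)
              * w F.1.set := by
      rintro ⟨F, hF⟩
      have hbad := hF.2.1
      rw [EnergyBad] at hbad
      have hPE : 0 ≤ (PoissonR (sg.restrict I₀.set) F) ^ 2 * energySq w F :=
        mul_nonneg (sq_nonneg _) (energySq_nonneg w F)
      calc ENNReal.ofReal (10 * (C₀ * H ^ 2)) * sg F.set
          = ENNReal.ofReal (10 * (C₀ * H ^ 2) * (sg F.set).toReal) := by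
            conv_rhs => rw [ENNReal.ofReal_mul (by positivity : (0:ℝ) ≤ 10 * (C₀ * H ^ 2)),
              ENNReal.ofReal_toReal (DI.measure_lt_top sg F).ne]
        _ ≤ ENNReal.ofReal ((PoissonR (sg.restrict I₀.set) F) ^ 2 * energySq w F
              * (w F.set).toReal) := by
            apply ENNReal.ofReal_le_ofReal
            calc 10 * (C₀ * H ^ 2) * (sg F.set).toReal
                = 10 * C₀ * H ^ 2 * (sg F.set).toReal := by ring
              _ ≤ _ := hbad.le
        _ = ENNReal.ofReal ((PoissonR (sg.restrict I₀.set) F) ^ 2 * energySq w F)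
              * w F.set := by
            rw [ENNReal.ofReal_mul hPE, ENNReal.ofReal_toReal (DI.measure_lt_top w F).ne]
    have hcov : sg (⋃ F ∈ ℱ, F.set) ≤ ∑' F : ℱ, sg F.1.set :=
      measure_biUnion_le sg (Set.to_countable ℱ) DI.set
    have chain : ENNReal.ofReal (10 * (C₀ * H ^ 2)) * sg (⋃ F ∈ ℱ, F.set)
        ≤ ENNReal.ofReal (C₀ * H ^ 2) * sg I₀.set := by
      calc ENNReal.ofReal (10 * (C₀ * H ^ 2)) * sg (⋃ F ∈ ℱ, F.set)
          ≤ ENNReal.ofReal (10 * (C₀ * H ^ 2)) * ∑' F : ℱ, sg F.1.set :=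
            mul_le_mul_right hcov _
        _ = ∑' F : ℱ, ENNReal.ofReal (10 * (C₀ * H ^ 2)) * sg F.1.set :=
            ENNReal.tsum_mul_left.symm
        _ ≤ ∑' F : ℱ, ENNReal.ofReal
              ((PoissonR (sg.restrict I₀.set) F.1) ^ 2 * energySq w F.1) * w F.1.set :=
            ENNReal.tsum_le_tsum key
        _ ≤ ENNReal.ofReal (C₀ * H ^ 2) * sg I₀.set := h1
    have hc0 : ENNReal.ofReal (C₀ * H ^ 2) ≠ 0 := ne_of_gt (ENNReal.ofReal_pos.2 hc)
    have hctop : ENNReal.ofReal (C₀ * H ^ 2) ≠ ⊤ := ENNReal.ofReal_ne_top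
    have h10 : ENNReal.ofReal (10 * (C₀ * H ^ 2))
        = ENNReal.ofReal (C₀ * H ^ 2) * 10 := by
      rw [ENNReal.ofReal_mul (by norm_num : (0:ℝ) ≤ 10), mul_comm]
      norm_num
    rw [h10, mul_assoc] at chain
    have h2 : 10 * sg (⋃ F ∈ ℱ, F.set) ≤ sg I₀.set :=
      (ENNReal.mul_le_mul_iff_right hc0 hctop).1 chain
    rw [ENNReal.le_div_iff_mul_le (Or.inl (by norm_num)) (Or.inl (by norm_num)),
      mul_comm]
    exact h2

end TwoWeight
end
end

section
/- Let σ be a locally finite positive Borel measure on ℝ, and let J ⊂ L ⊂ K ⊂ I₀ be dyadic intervals with 2^r|L| ≤ |K| and with L either good or the child of a good interval. Then P(σ1_{I₀∖K}, J)/|J| ≍ P(σ1_{I₀∖K}, L)/|L|, i.e. there are constants 0 < c ≤ C < ∞ depending only on the goodness parameters r, ε such that c · P(σ1_{I₀∖K}, L)/|L| ≤ P(σ1_{I₀∖K}, J)/|J| ≤ C · P(σ1_{I₀∖K}, L)/|L|. -/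
open MeasureTheory Set
open scoped ENNReal NNReal

noncomputable section

namespace TwoWeight

/-! ### Auxiliary lemmas for statement10 -/

lemma le_infDist' {s : Set ℝ} {x c : ℝ} (hs : s.Nonempty)
    (h : ∀ y ∈ s, c ≤ dist x y) : c ≤ Metric.infDist x s := by
  rw [Metric.infDist_eq_iInf]
  haveI := hs.to_subtype
  exact le_ciInf fun y => h y y.2

lemma kernel_cmp {lJ lL dJ dL : ℝ} (hlJ : 0 < lJ) (hlL : 0 < lL) (hJL : lJ ≤ lL)
    (h1 : dL ≤ dJ) (h2 : dJ ≤ dL + lL) (h3 : lL ≤ dL) :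
    (1/3) * (lL / (lL^2 + dL^2)) * lJ ≤ 1 * (lJ / (lJ^2 + dJ^2)) * lL ∧
    1 * (lJ / (lJ^2 + dJ^2)) * lL ≤ 2 * (lL / (lL^2 + dL^2)) * lJ := by
  have hDL : 0 < lL^2 + dL^2 := by positivity
  have hDJ : 0 < lJ^2 + dJ^2 := by positivity
  constructor
  · have e1 : (1/3) * (lL / (lL^2 + dL^2)) * lJ = (lL*lJ/3) / (lL^2+dL^2) := by ring
    have e2 : 1 * (lJ / (lJ^2 + dJ^2)) * lL = (lJ*lL) / (lJ^2+dJ^2) := by ring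
    have hdJ0 : (0:ℝ) < dJ := lt_of_lt_of_le hlL (h3.trans h1)
    have key1 : lJ^2 + dJ^2 ≤ 3*(lL^2 + dL^2) := by
      nlinarith [sq_nonneg (dL - lL), mul_self_le_mul_self hdJ0.le h2,
        mul_self_le_mul_self hlJ.le hJL]
    rw [e1, e2, div_le_div_iff₀ hDL hDJ]
    nlinarith [mul_le_mul_of_nonneg_left key1 (by positivity : (0:ℝ) ≤ lL*lJ/3)]
  · have e1 : 2 * (lL / (lL^2 + dL^2)) * lJ = (2*lL*lJ) / (lL^2+dL^2) := by ring
    have e2 : 1 * (lJ / (lJ^2 + dJ^2)) * lL = (lJ*lL) / (lJ^2+dJ^2) := by ring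
    have hdL0 : (0:ℝ) < dL := lt_of_lt_of_le hlL h3
    have key2 : lL^2 + dL^2 ≤ 2*(lJ^2 + dJ^2) := by
      nlinarith [mul_self_le_mul_self hlL.le (h3.trans h1), mul_self_le_mul_self hdL0.le h1]
    rw [e1, e2, div_le_div_iff₀ hDJ hDL]
    nlinarith [mul_le_mul_of_nonneg_left key2 (by positivity : (0:ℝ) ≤ lL*lJ)]

lemma const_mul_lintegral_ofReal (μ : Measure ℝ) (a b : ℝ) (ha : 0 ≤ a) (hb : 0 ≤ b)
    (f : ℝ → ℝ) :
    ENNReal.ofReal a * ((∫⁻ x, ENNReal.ofReal (f x) ∂μ) * ENNReal.ofReal b)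
      = ∫⁻ x, ENNReal.ofReal (a * f x * b) ∂μ := by
  rw [mul_comm (∫⁻ x, ENNReal.ofReal (f x) ∂μ) (ENNReal.ofReal b), ← mul_assoc,
    ← ENNReal.ofReal_mul ha, ← lintegral_const_mul' _ _ ENNReal.ofReal_ne_top]
  congr 1
  ext x
  rw [← ENNReal.ofReal_mul (by positivity)]
  ring_nf

lemma lintegral_ofReal_cmp {μ : Measure ℝ} {s : Set ℝ} (hs : MeasurableSet s)
    (f g : ℝ → ℝ) (h : ∀ x ∈ s, f x ≤ g x) :
    ∫⁻ x, ENNReal.ofReal (f x) ∂(μ.restrict s) ≤ ∫⁻ x, ENNReal.ofReal (g x) ∂(μ.restrict s) :=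
  lintegral_mono_ae ((ae_restrict_mem hs).mono fun x hx =>
    ENNReal.ofReal_le_ofReal (h x hx))

lemma rpow_lb {a b eps : ℝ} (ha : 0 < a) (hab : a ≤ b) (h0 : 0 ≤ eps) (h1 : eps ≤ 1) :
    a ≤ a ^ eps * b ^ (1 - eps) := by
  have h2 : a ^ (1 - eps) ≤ b ^ (1 - eps) := Real.rpow_le_rpow ha.le hab (by linarith)
  calc a = a ^ eps * a ^ (1 - eps) := by
        rw [← Real.rpow_add ha]; norm_num
  _ ≤ a ^ eps * b ^ (1 - eps) := mul_le_mul_of_nonneg_left h2 (Real.rpow_nonneg ha.le _)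

namespace DI

lemma len_pos (I : DI) : 0 < I.len := zpow_pos two_pos _
lemma right_sub_left (I : DI) : I.right - I.left = I.len := by
  simp only [left, right, len]; ring
lemma left_lt_right (I : DI) : I.left < I.right := by
  have := I.len_pos; have := I.right_sub_left; linarith
lemma nonempty_set (I : DI) : I.set.Nonempty := ⟨I.left, le_refl _, I.left_lt_right⟩

lemma half (I : DI) : (2 : ℝ) ^ (I.k - 1) = 2 ^ I.k / 2 := by
  rw [zpow_sub₀ (two_ne_zero), zpow_one]

lemma lc_left (I : DI) : I.lc.left = I.left := by
  simp only [lc, left, half]; push_cast; ring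
lemma rc_right (I : DI) : I.rc.right = I.right := by
  simp only [rc, right, half]; push_cast; ring
lemma lc_len (I : DI) : I.lc.len = I.len / 2 := by
  simp only [lc, len, half]
lemma rc_len (I : DI) : I.rc.len = I.len / 2 := by
  simp only [rc, len, half]
lemma lc_subset (I : DI) : I.lc.set ⊆ I.set := by
  apply Ico_subset_Ico
  · rw [I.lc_left]
  · have h2 : (0:ℝ) < 2 ^ I.k := zpow_pos two_pos _
    simp only [lc, right, left, half]
    push_cast
    nlinarith
lemma rc_subset (I : DI) : I.rc.set ⊆ I.set := by
  apply Ico_subset_Ico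
  · have h2 : (0:ℝ) < 2 ^ I.k := zpow_pos two_pos _
    simp only [rc, left, half]
    push_cast
    nlinarith
  · rw [I.rc_right]

lemma subset_iff {A B : DI} (h : A.set ⊆ B.set) : B.left ≤ A.left ∧ A.right ≤ B.right :=
  (Set.Ico_subset_Ico_iff A.left_lt_right).mp h

lemma len_le_of_subset {A B : DI} (h : A.set ⊆ B.set) : A.len ≤ B.len := by
  obtain ⟨h1, h2⟩ := subset_iff h
  have := A.right_sub_left; have := B.right_sub_left; linarith

lemma nested {A B : DI} (hlen : A.len ≤ B.len) (hne : (A.set ∩ B.set).Nonempty) :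
    A.set ⊆ B.set := by
  have hk : A.k ≤ B.k := by
    rwa [len, len, zpow_le_zpow_iff_right₀ (by norm_num : (1:ℝ) < 2)] at hlen
  obtain ⟨x, hxA, hxB⟩ := hne
  set e := (B.k - A.k).toNat with he
  have hBk : B.k = A.k + (e : ℤ) := by omega
  have hA2 : (0:ℝ) < 2 ^ A.k := zpow_pos two_pos _
  have hpow : (2:ℝ) ^ B.k = 2 ^ A.k * ((2^e : ℤ) : ℝ) := by
    rw [hBk, zpow_add₀ two_ne_zero]
    push_cast
    rw [zpow_natCast]
  simp only [set, left, right, mem_Ico] at hxA hxB ⊢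
  rw [hpow] at hxB
  have h1 : (B.n * 2^e : ℤ) ≤ A.n := by
    have h : (2:ℝ)^A.k * ((B.n : ℝ) * ((2^e : ℤ) : ℝ)) < 2^A.k * ((A.n : ℝ) + 1) := by
      calc (2:ℝ)^A.k * ((B.n : ℝ) * ((2^e : ℤ) : ℝ)) = 2^A.k * ((2^e:ℤ):ℝ) * B.n := by ring
      _ ≤ x := hxB.1
      _ < 2^A.k * ((A.n : ℝ) + 1) := hxA.2
    have h' := (mul_lt_mul_iff_right₀ hA2).mp h
    have h'' : ((B.n * 2^e : ℤ) : ℝ) < ((A.n + 1 : ℤ) : ℝ) := by push_cast at h' ⊢; linarith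
    exact Int.lt_add_one_iff.mp (by exact_mod_cast h'')
  have h2 : A.n + 1 ≤ (B.n + 1) * 2^e := by
    have h : (2:ℝ)^A.k * (A.n : ℝ) < 2^A.k * (((B.n:ℝ) + 1) * ((2^e:ℤ):ℝ)) := by
      calc (2:ℝ)^A.k * (A.n:ℝ) ≤ x := hxA.1
      _ < 2^A.k * ((2^e:ℤ):ℝ) * ((B.n:ℝ) + 1) := hxB.2
      _ = 2^A.k * (((B.n:ℝ) + 1) * ((2^e:ℤ):ℝ)) := by ring
    have h' := (mul_lt_mul_iff_right₀ hA2).mp h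
    have h'' : ((A.n : ℤ) : ℝ) < (((B.n + 1) * 2^e : ℤ) : ℝ) := by push_cast at h' ⊢; linarith
    exact Int.add_one_le_iff.mpr (by exact_mod_cast h'')
  intro y hy
  simp only [set, left, right, mem_Ico] at hy ⊢
  rw [hpow]
  constructor
  · calc (2:ℝ)^A.k * ((2^e:ℤ):ℝ) * (B.n:ℝ) = 2^A.k * ((B.n * 2^e : ℤ) : ℝ) := by push_cast; ring
    _ ≤ 2^A.k * (A.n : ℝ) := by
        apply mul_le_mul_of_nonneg_left _ hA2.le
        exact_mod_cast h1
    _ ≤ y := hy.1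
  · calc y < 2^A.k * ((A.n:ℝ) + 1) := hy.2
    _ ≤ 2^A.k * (((B.n + 1) * 2^e : ℤ) : ℝ) := by
        apply mul_le_mul_of_nonneg_left _ hA2.le
        exact_mod_cast h2
    _ = 2^A.k * ((2^e:ℤ):ℝ) * ((B.n:ℝ) + 1) := by push_cast; ring

end DI

/-- comparability of Poisson integrals
`P(σ1_{I₀∖K}, J)/|J| ≍ P(σ1_{I₀∖K}, L)/|L|` for `J ⊆ L ⋐ K ⊆ I₀`, with `L` good or the
child of a good interval. -/
theorem statement10 (r : ℕ) (eps : ℝ) (heps0 : 0 < eps) (heps1 : eps < 1)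
    (hre : 1 ≤ (r : ℝ) * (1 - eps)) :
    ∃ c C : ℝ, 0 < c ∧ c ≤ C ∧
    ∀ (sg : Measure ℝ), IsLocallyFiniteMeasure sg →
    ∀ I₀ K L J : DI, J.set ⊆ L.set → L.set ⊆ K.set → K.set ⊆ I₀.set →
      (2 : ℝ) ^ r * L.len ≤ K.len →
      (Good r eps L ∨ ∃ M : DI, Good r eps M ∧ (L = M.lc ∨ L = M.rc)) →
      ENNReal.ofReal c
          * (Poisson (sg.restrict (I₀.set \ K.set)) L.left L.right * ENNReal.ofReal J.len)
        ≤ Poisson (sg.restrict (I₀.set \ K.set)) J.left J.right * ENNReal.ofReal L.len ∧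
      Poisson (sg.restrict (I₀.set \ K.set)) J.left J.right * ENNReal.ofReal L.len
        ≤ ENNReal.ofReal C
          * (Poisson (sg.restrict (I₀.set \ K.set)) L.left L.right * ENNReal.ofReal J.len) := by
  refine ⟨1/3, 2, by norm_num, by norm_num, ?_⟩
  intro sg _ I₀ K L J hJL hLK hKI hrLK hgood
  have hLpos := L.len_pos
  have hJpos := J.len_pos
  have hr1 : 1 ≤ r := by
    rcases Nat.eq_zero_or_pos r with rfl | h
    · push_cast at hre; linarith
    · exact h
  have h2r : (2:ℝ) ≤ 2 ^ r := by
    calc (2:ℝ) = 2^1 := (pow_one 2).symm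
    _ ≤ 2^r := pow_le_pow_right₀ one_le_two hr1
  have hLKlen : L.len ≤ K.len := by nlinarith
  have hzp : (2:ℝ) ^ ((r:ℤ) - 1) * 2 = 2 ^ r := by
    rw [zpow_sub₀ (two_ne_zero), zpow_one, zpow_natCast]
    field_simp
  have hzpos : (0:ℝ) < 2 ^ ((r:ℤ) - 1) := zpow_pos two_pos _
  obtain ⟨hb1, hb2⟩ : K.left + L.len ≤ L.left ∧ L.right + L.len ≤ K.right := by
    rcases hgood with hG | ⟨M, hGM, hM⟩
    · have hlen : (2:ℝ)^((r:ℤ)-1) * L.len ≤ K.len := by nlinarith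
      obtain ⟨hlc, hrc⟩ := hG K hLK hlen
      have hLB : L.len ≤ L.len ^ eps * K.len ^ (1 - eps) :=
        rpow_lb hLpos hLKlen heps0.le heps1.le
      rw [bdist] at hlc hrc
      constructor
      · have h' := le_trans (le_trans hLB hlc) (min_le_left _ _)
        rw [L.lc_left] at h'
        linarith
      · have h' := le_trans (le_trans hLB hrc) (min_le_right _ _)
        rw [L.rc_right] at h'
        linarith
    · have hLM : L.set ⊆ M.set := by rcases hM with rfl | rfl; exacts [M.lc_subset, M.rc_subset]
      have hLlen : L.len = M.len / 2 := by rcases hM with rfl | rfl; exacts [M.lc_len, M.rc_len]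
      have hMpos := M.len_pos
      have hMK : M.set ⊆ K.set := by
        apply DI.nested
        · nlinarith
        · obtain ⟨x, hx⟩ := L.nonempty_set
          exact ⟨x, hLM hx, hLK hx⟩
      have hlen2 : (2:ℝ)^((r:ℤ)-1) * M.len ≤ K.len := by nlinarith
      obtain ⟨hlc, hrc⟩ := hGM K hMK hlen2
      have hMKlen : M.len ≤ K.len := DI.len_le_of_subset hMK
      have hMB : M.len ≤ M.len ^ eps * K.len ^ (1-eps) :=
        rpow_lb hMpos hMKlen heps0.le heps1.le
      have hLleM : L.len ≤ M.len := by nlinarith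
      rcases hM with rfl | rfl
      · rw [bdist] at hlc
        have h' := le_trans hMB hlc
        exact ⟨by linarith [le_trans h' (min_le_left _ _)],
          by linarith [le_trans h' (min_le_right _ _)]⟩
      · rw [bdist] at hrc
        have h' := le_trans hMB hrc
        exact ⟨by linarith [le_trans h' (min_le_left _ _)],
          by linarith [le_trans h' (min_le_right _ _)]⟩
  have hJLe := DI.subset_iff hJL
  have hJlen : J.len ≤ L.len := DI.len_le_of_subset hJL
  have hJrl := J.right_sub_left
  have hLrl := L.right_sub_left
  have key : ∀ x ∈ I₀.set \ K.set,
      ((1/3) * ((L.right - L.left) /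
          ((L.right - L.left)^2 + (Metric.infDist x (Icc L.left L.right))^2)) * J.len
        ≤ 1 * ((J.right - J.left) /
          ((J.right - J.left)^2 + (Metric.infDist x (Icc J.left J.right))^2)) * L.len)
      ∧ (1 * ((J.right - J.left) /
          ((J.right - J.left)^2 + (Metric.infDist x (Icc J.left J.right))^2)) * L.len
        ≤ 2 * ((L.right - L.left) /
          ((L.right - L.left)^2 + (Metric.infDist x (Icc L.left L.right))^2)) * J.len) := by
    intro x hx
    have hxK : x ∉ K.set := hx.2
    set dJ := Metric.infDist x (Icc J.left J.right) with hdJdef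
    set dL := Metric.infDist x (Icc L.left L.right) with hdLdef
    have hneJ : (Icc J.left J.right).Nonempty := nonempty_Icc.mpr J.left_lt_right.le
    have hneL : (Icc L.left L.right).Nonempty := nonempty_Icc.mpr L.left_lt_right.le
    have hsubIcc : Icc J.left J.right ⊆ Icc L.left L.right := Icc_subset_Icc hJLe.1 hJLe.2
    have hdLJ : dL ≤ dJ := Metric.infDist_le_infDist_of_subset hsubIcc hneJ
    have hdJL : dJ ≤ dL + L.len := by
      have h' : ∀ p ∈ Icc L.left L.right, dJ - L.len ≤ dist x p := by
        intro p hp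
        have h1 : dJ ≤ dist x J.left :=
          Metric.infDist_le_dist_of_mem ⟨le_refl _, J.left_lt_right.le⟩
        have h2 : dist x J.left ≤ dist x p + dist p J.left := dist_triangle _ _ _
        have h3 : dist p J.left ≤ L.len := by
          rw [Real.dist_eq, abs_le]
          constructor
          · have := hp.1; have := hJLe.2; have := J.left_lt_right; linarith
          · have := hp.2; have := hJLe.1; linarith
        linarith
      have := le_infDist' hneL h'
      linarith
    have hdLlb : L.len ≤ dL := by
      apply le_infDist' hneL
      intro p hp
      rw [Real.dist_eq]
      simp only [DI.set, mem_Ico, not_and, not_lt] at hxK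
      rcases lt_or_ge x K.left with hxl | hxr
      · have h' : L.len ≤ p - x := by linarith [hp.1]
        calc L.len ≤ p - x := h'
        _ ≤ |p - x| := le_abs_self _
        _ = |x - p| := abs_sub_comm _ _
      · have hxr' : K.right ≤ x := hxK hxr
        have h' : L.len ≤ x - p := by linarith [hp.2]
        exact h'.trans (le_abs_self _)
    rw [J.right_sub_left, L.right_sub_left]
    exact kernel_cmp hJpos hLpos hJlen hdLJ hdJL hdLlb
  have hms : MeasurableSet (I₀.set \ K.set) :=
    measurableSet_Ico.diff measurableSet_Ico
  have hL1 : Poisson (sg.restrict (I₀.set \ K.set)) J.left J.right * ENNReal.ofReal L.len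
      = ∫⁻ x, ENNReal.ofReal (1 * ((J.right - J.left) /
          ((J.right - J.left)^2 + (Metric.infDist x (Icc J.left J.right))^2)) * L.len)
          ∂(sg.restrict (I₀.set \ K.set)) := by
    rw [← const_mul_lintegral_ofReal _ 1 L.len zero_le_one hLpos.le, ENNReal.ofReal_one,
      one_mul, Poisson]
  constructor
  · rw [Poisson, const_mul_lintegral_ofReal _ _ _ (by norm_num) hJpos.le, hL1]
    exact lintegral_ofReal_cmp hms _ _ (fun x hx => (key x hx).1)
  · rw [hL1, Poisson, const_mul_lintegral_ofReal _ _ _ (by norm_num) hJpos.le]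
    exact lintegral_ofReal_cmp hms _ _ (fun x hx => (key x hx).2)

end TwoWeight
end
end
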